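/- Let ū and u be open-loop controls, let μ̄ and μ be solutions of the FPK equation for ū and for u respectively, both with the same initial law ϑ, and let p̄ : I × ℝⁿ → ℝ be of class C^{1,2}, bounded together with ∂_t p̄, ∇_x p̄ and ∇²_x p̄, satisfying ∂_s p̄_s(x) + ∇p̄_s(x)·f(s,x,ū(s)) + Tr(∇²p̄_s(x) D(s,x)) = 0 for all (s,x) ∈ I × ℝⁿ and p̄_T = ℓ. Then the exact increment formula holds: ∫ ℓ dμ_T − ∫ ℓ dμ̄_T = ∫_0^T ∫ ∇p̄_s(x)·( f(s,x,u(s)) − f(s,x,ū(s)) ) dμ_s(x) ds. -/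

import Mathlib

open MeasureTheory intervalIntegral

noncomputable section

/-- Euclidean space ℝⁿ. -/
abbrev Eu (n : ℕ) : Type := EuclideanSpace ℝ (Fin n)

/-- Laplacian of `φ` at `x`: the trace of the Hessian. -/
def lapl {n : ℕ} (φ : Eu n → ℝ) (x : Eu n) : ℝ :=
  ∑ i : Fin n, fderiv ℝ (fun y => fderiv ℝ φ y (EuclideanSpace.single i 1)) x
    (EuclideanSpace.single i 1)

/-- `η` is of class C^{1,2} (C¹ in time, C² in space) and bounded together with
`∂ₜη`, `∇ₓη` and `∇²ₓη`. -/
structure C12Bdd {n : ℕ} (η : ℝ → Eu n → ℝ) : Prop where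
  smooth_t : ∀ x, ContDiff ℝ 1 fun t => η t x
  smooth_x : ∀ t, ContDiff ℝ 2 (η t)
  bdd : ∃ C, ∀ t x, |η t x| ≤ C
  bdd_dt : ∃ C, ∀ t x, |deriv (fun s => η s x) t| ≤ C
  bdd_grad : ∃ C, ∀ t x, ‖gradient (η t) x‖ ≤ C
  bdd_hess : ∃ C, ∀ t x, ‖fderiv ℝ (fderiv ℝ (η t)) x‖ ≤ C

/-- `Tr(∇²φ(x) · D)`: the trace of the product of the Hessian of `φ` at `x` with the
matrix `D`. -/
def hessTr {n : ℕ} (φ : Eu n → ℝ) (x : Eu n) (D : Matrix (Fin n) (Fin n) ℝ) : ℝ :=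
  ∑ i : Fin n, ∑ j : Fin n,
    fderiv ℝ (fun y => fderiv ℝ φ y (EuclideanSpace.single j 1)) x
      (EuclideanSpace.single i 1) * D j i

/-- `μ : [0,T] → P(ℝⁿ)` is a (distributional) solution of the Fokker–Planck–Kolmogorov
equation for the open-loop control `u`, drift `f`, diffusion matrix `D`, with initial
law `ϑ`. -/
def IsFPKol {n m : ℕ} (T : ℝ) (f : ℝ → Eu n → Eu m → Eu n)
    (D : ℝ → Eu n → Matrix (Fin n) (Fin n) ℝ)
    (u : ℝ → Eu m) (ϑ : Measure (Eu n)) (μ : ℝ → Measure (Eu n)) : Prop :=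
  (∀ t, IsProbabilityMeasure (μ t)) ∧
  μ 0 = ϑ ∧
  (∀ φ : Eu n → ℝ, Continuous φ → (∃ C, ∀ x, |φ x| ≤ C) →
    Measurable fun t => ∫ x, φ x ∂μ t) ∧
  (∀ η : ℝ → Eu n → ℝ, C12Bdd η → ∀ t ∈ Set.Icc (0:ℝ) T,
    (∫ x, η t x ∂μ t) - (∫ x, η 0 x ∂μ 0) =
      ∫ s in (0:ℝ)..t, ∫ x, (deriv (fun r => η r x) s
        + (inner ℝ (gradient (η s) x) (f s x (u s)) : ℝ) + hessTr (η s) x (D s x)) ∂μ s)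

/-!
Test both FPK equations with `p̄`. Along `μ̄` the integrand is the backward equation for `ū`
and vanishes; along `μ` it reduces to `∇p̄ · (f(u) - f(ū))`. The initial terms cancel because
both curves start from `ϑ`, and `p̄_T = ℓ` turns the terminal terms into the costs.
-/

namespace IsFPKol

variable {n m : ℕ} {T : ℝ} {f : ℝ → Eu n → Eu m → Eu n}
  {D : ℝ → Eu n → Matrix (Fin n) (Fin n) ℝ} {u ub : ℝ → Eu m} {ϑ : Measure (Eu n)}
  {μ : ℝ → Measure (Eu n)} {η : ℝ → Eu n → ℝ}

theorem integral_sub_initial_eq_of_backward (hμ : IsFPKol T f D u ϑ μ) (hη : C12Bdd η)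
    (hback : ∀ s ∈ Set.Icc (0:ℝ) T, ∀ x : Eu n,
      deriv (fun r => η r x) s + (inner ℝ (gradient (η s) x) (f s x (ub s)) : ℝ)
        + hessTr (η s) x (D s x) = 0)
    {t : ℝ} (ht : t ∈ Set.Icc 0 T) :
    (∫ x, η t x ∂μ t) - (∫ x, η 0 x ∂ϑ) =
      ∫ s in (0:ℝ)..t, ∫ x,
        (inner ℝ (gradient (η s) x) (f s x (u s) - f s x (ub s)) : ℝ) ∂μ s := by
  obtain ⟨-, hμ0, -, hweak⟩ := hμ
  rw [← hμ0, hweak η hη t ht]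
  refine intervalIntegral.integral_congr fun s hs => integral_congr_ae (ae_of_all _ fun x => ?_)
  rw [Set.uIcc_of_le ht.1] at hs
  have hback_sx := hback s ⟨hs.1, hs.2.trans ht.2⟩ x
  simp only [inner_sub_right]
  linarith

theorem integral_eq_initial_of_backward (hμ : IsFPKol T f D u ϑ μ) (hη : C12Bdd η)
    (hback : ∀ s ∈ Set.Icc (0:ℝ) T, ∀ x : Eu n,
      deriv (fun r => η r x) s + (inner ℝ (gradient (η s) x) (f s x (u s)) : ℝ)
        + hessTr (η s) x (D s x) = 0)
    {t : ℝ} (ht : t ∈ Set.Icc 0 T) :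
    ∫ x, η t x ∂μ t = ∫ x, η 0 x ∂ϑ :=
  sub_eq_zero.mp <| by
    simpa using hμ.integral_sub_initial_eq_of_backward hη hback ht

end IsFPKol

theorem exact_increment_formula_open_loop_general
    {n m : ℕ} (T : ℝ) (hT : 0 < T)
    (f : ℝ → Eu n → Eu m → Eu n)
    (D : ℝ → Eu n → Matrix (Fin n) (Fin n) ℝ)
    (ℓ : Eu n → ℝ)
    (ub : ℝ → Eu m)
    (u : ℝ → Eu m)
    (ϑ : Measure (Eu n)) (μb μ : ℝ → Measure (Eu n))
    (hFPKb : IsFPKol T f D ub ϑ μb) (hFPK : IsFPKol T f D u ϑ μ)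
    (pb : ℝ → Eu n → ℝ) (hpb : C12Bdd pb)
    (hpde : ∀ s ∈ Set.Icc (0:ℝ) T, ∀ x : Eu n,
      deriv (fun r => pb r x) s + (inner ℝ (gradient (pb s) x) (f s x (ub s)) : ℝ)
        + hessTr (pb s) x (D s x) = 0)
    (hterm : ∀ x, pb T x = ℓ x) :
    (∫ x, ℓ x ∂μ T) - (∫ x, ℓ x ∂μb T) =
      ∫ s in (0:ℝ)..T, ∫ x,
        (inner ℝ (gradient (pb s) x) (f s x (u s) - f s x (ub s)) : ℝ) ∂μ s := by
  have hT_mem : T ∈ Set.Icc 0 T := ⟨hT.le, le_rfl⟩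
  have hμ := hFPK.integral_sub_initial_eq_of_backward hpb hpde hT_mem
  have hμb := hFPKb.integral_eq_initial_of_backward hpb hpde hT_mem
  simp only [hterm] at hμ hμb
  rw [hμb, hμ]

theorem exact_increment_formula_open_loop
    {n m : ℕ} (hn : 1 ≤ n) (hm : 1 ≤ m) (T : ℝ) (hT : 0 < T)
    (U : Set (Eu m)) (hUne : U.Nonempty) (hUcp : IsCompact U)
    (f : ℝ → Eu n → Eu m → Eu n)
    (hfmeas : Measurable fun p : ℝ × Eu n × Eu m => f p.1 p.2.1 p.2.2)
    (hfbdd : ∃ C, ∀ t x υ, ‖f t x υ‖ ≤ C)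
    (D : ℝ → Eu n → Matrix (Fin n) (Fin n) ℝ)
    (hDcont : Continuous fun p : ℝ × Eu n => D p.1 p.2)
    (hDbdd : ∃ C, ∀ t x i j, |D t x i j| ≤ C)
    (hDpsd : ∀ t x, (D t x).PosSemidef) (hDsymm : ∀ t x, (D t x).IsSymm)
    (ℓ : Eu n → ℝ) (hℓ : ContDiff ℝ 2 ℓ) (hℓbdd : ∃ C, ∀ x, |ℓ x| ≤ C)
    (ub : ℝ → Eu m) (hubmeas : Measurable ub) (hubU : ∀ t, ub t ∈ U)
    (u : ℝ → Eu m) (humeas : Measurable u) (huU : ∀ t, u t ∈ U)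
    (ϑ : Measure (Eu n)) (μb μ : ℝ → Measure (Eu n))
    (hFPKb : IsFPKol T f D ub ϑ μb) (hFPK : IsFPKol T f D u ϑ μ)
    (pb : ℝ → Eu n → ℝ) (hpb : C12Bdd pb)
    (hpde : ∀ s ∈ Set.Icc (0:ℝ) T, ∀ x : Eu n,
      deriv (fun r => pb r x) s + (inner ℝ (gradient (pb s) x) (f s x (ub s)) : ℝ)
        + hessTr (pb s) x (D s x) = 0)
    (hterm : ∀ x, pb T x = ℓ x) :
    (∫ x, ℓ x ∂μ T) - (∫ x, ℓ x ∂μb T) =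
      ∫ s in (0:ℝ)..T, ∫ x,
        (inner ℝ (gradient (pb s) x) (f s x (u s) - f s x (ub s)) : ℝ) ∂μ s :=
  exact_increment_formula_open_loop_general T hT f D ℓ ub u ϑ μb μ hFPKb hFPK pb hpb hpde hterm
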